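/- Let R be a finite commutative local ring with maximal ideal M, and let 0 ≤ m ≤ n. The number of m×n matrices over R of McCoy rank m equals |R|^{m(m-1)/2} · ∏_{i=0}^{m-1} (|R|^{n-i} − |M|^{n-i}). -/

import Mathlib

/-!
An Artinian local ring has nilpotent maximal ideal `M`, so every proper ideal is killed by a
nonzero element; hence the ideal of `m × m` minors has zero annihilator only if it is the unit
ideal, i.e. only if some minor is a unit, i.e. only if the reduction of `A` modulo `M` has
linearly independent rows. Splitting `R` set-theoretically as `R ⧸ M × M`, the matrices of McCoy
rank `m` are counted as `|M| ^ (m n)` times the number of `m × n` matrices of full row rank over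
the residue field `𝔽_q`, namely `∏ (q ^ n - q ^ i)`, and `|R| = |M| q` turns this into the
claimed product.
-/

open Matrix

/-- The ideal generated by all `k × k` minors of a matrix. -/
def minorsIdeal {R : Type*} [CommRing R] {m n : ℕ}
    (A : Matrix (Fin m) (Fin n) R) (k : ℕ) : Ideal R :=
  Ideal.span {d | ∃ (r : Fin k → Fin m) (c : Fin k → Fin n), d = (A.submatrix r c).det}

/-- The McCoy rank of a matrix. -/
noncomputable def mccoyRank {R : Type*} [CommRing R] {m n : ℕ}
    (A : Matrix (Fin m) (Fin n) R) : ℕ :=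
  sSup {k | (minorsIdeal A k).annihilator = ⊥}

open IsLocalRing

theorem Matrix.exists_isUnit_det_submatrix_iff_linearIndependent_row {K : Type*} [Field K]
    {m n : ℕ} (B : Matrix (Fin m) (Fin n) K) :
    (∃ (r : Fin m → Fin m) (c : Fin m → Fin n), IsUnit (B.submatrix r c).det) ↔
      LinearIndependent K B.row := by
  constructor
  · rintro ⟨r, c, hu⟩
    rw [← isUnit_iff_isUnit_det, ← linearIndependent_rows_iff_isUnit] at hu
    have hr : LinearIndependent K (B.row ∘ r) := hu.of_comp (LinearMap.funLeft K K c)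
    have hr_inj : Function.Injective r := hr.injective.of_comp
    exact (linearIndependent_equiv (Equiv.ofBijective r hr_inj.bijective_of_finite)).mp hr
  · intro hli
    obtain ⟨κ, a, ha, hspan, hli_a⟩ := exists_linearIndependent' K B.col
    have hcols : Submodule.span K (Set.range B.col) = ⊤ := by
      apply Submodule.eq_top_of_finrank_eq
      rw [← rank_eq_finrank_span_cols, hli.rank_matrix, Module.finrank_fin_fun, Fintype.card_fin]
    have : Finite κ := Finite.of_injective a ha
    have : Fintype κ := Fintype.ofFinite κ
    have hκ : Fintype.card κ = m := by
      rw [← finrank_span_eq_card hli_a, hspan, hcols, finrank_top, Module.finrank_fin_fun]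
    let e : Fin m ≃ κ := (Fintype.equivFinOfCardEq hκ).symm
    refine ⟨id, a ∘ e, ?_⟩
    rw [← isUnit_iff_isUnit_det, ← linearIndependent_cols_iff_isUnit]
    exact hli_a.comp e e.injective

section LocalRing

variable {R : Type*} [CommRing R]

theorem IsLocalRing.span_eq_top_iff_exists_isUnit [IsLocalRing R] {S : Set R} :
    Ideal.span S = ⊤ ↔ ∃ s ∈ S, IsUnit s := by
  refine ⟨fun h => ?_, fun ⟨s, hs, hu⟩ => Ideal.eq_top_of_isUnit_mem _ (Ideal.subset_span hs) hu⟩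
  by_contra! hS
  have hle : Ideal.span S ≤ maximalIdeal R := Ideal.span_le.mpr hS
  exact (maximalIdeal.isMaximal R).ne_top (top_le_iff.mp (h ▸ hle))

theorem Ideal.annihilator_ne_bot_of_isNilpotent [Nontrivial R] {I : Ideal R}
    (hI : IsNilpotent I) : I.annihilator ≠ ⊥ := by
  obtain ⟨k, hk⟩ := hI
  -- The last nonzero ideal in the chain `⊤ ⊇ I ⊇ I ^ 2 ⊇ ⋯` is killed by `I`.
  suffices key : ∀ k, ∀ J : Ideal R, J ≠ ⊥ → J * I ^ k = ⊥ → I.annihilator ≠ ⊥ from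
    key k ⊤ top_ne_bot (by rw [top_mul, hk]; rfl)
  intro k
  induction k with
  | zero => exact fun J hJ hJk => absurd (by simpa using hJk) hJ
  | succ k ih =>
    intro J hJ hJk
    by_cases hJI : J * I = ⊥
    · exact ne_bot_of_le_ne_bot hJ (Submodule.le_annihilator_iff.mpr hJI)
    · exact ih (J * I) hJI (by rwa [mul_assoc, ← pow_succ'])

theorem IsLocalRing.annihilator_eq_bot_iff_eq_top [IsArtinianRing R] [IsLocalRing R]
    {I : Ideal R} : I.annihilator = ⊥ ↔ I = ⊤ := by
  refine ⟨fun h => ?_, fun h => by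
    rw [h, Submodule.annihilator_top, Module.annihilator_eq_bot]; infer_instance⟩
  by_contra hI
  have hM : IsNilpotent (maximalIdeal R) := by
    simpa [jacobson_eq_maximalIdeal ⊥ bot_ne_top] using
      IsArtinianRing.isNilpotent_jacobson_bot (R := R)
  refine Ideal.annihilator_ne_bot_of_isNilpotent hM (eq_bot_iff.mpr ?_)
  exact h ▸ Submodule.annihilator_mono (le_maximalIdeal hI)

end LocalRing

section Minors

variable {R : Type*} [CommRing R] {m n : ℕ}

theorem minorsIdeal_zero (A : Matrix (Fin m) (Fin n) R) : minorsIdeal A 0 = ⊤ :=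
  Ideal.eq_top_of_isUnit_mem _ (Ideal.subset_span ⟨Fin.elim0, Fin.elim0, (det_fin_zero).symm⟩)
    isUnit_one

theorem minorsIdeal_eq_bot_of_lt (A : Matrix (Fin m) (Fin n) R) {k : ℕ} (hk : m < k) :
    minorsIdeal A k = ⊥ := by
  refine le_bot_iff.mp (Ideal.span_le.mpr ?_)
  rintro _ ⟨r, c, rfl⟩
  obtain ⟨i, j, hr, hij⟩ := Function.not_injective_iff.mp
    fun hr => (Fintype.card_le_of_injective r hr).not_gt (by simpa using hk)
  simp [det_zero_of_row_eq (M := A.submatrix r c) hij (by funext x; simp [hr])]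

theorem mccoyRank_eq_iff [Nontrivial R] (A : Matrix (Fin m) (Fin n) R) :
    mccoyRank A = m ↔ (minorsIdeal A m).annihilator = ⊥ := by
  have h_zero : (minorsIdeal A 0).annihilator = ⊥ := by
    rw [minorsIdeal_zero, Submodule.annihilator_top, Module.annihilator_eq_bot]; infer_instance
  have h_bdd : ∀ k ∈ {k | (minorsIdeal A k).annihilator = ⊥}, k ≤ m := fun k hk => by
    by_contra! hmk
    rw [Set.mem_ofPred_eq, minorsIdeal_eq_bot_of_lt A hmk, Submodule.annihilator_bot] at hk
    exact top_ne_bot hk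
  refine ⟨fun h => ?_, fun h => ?_⟩
  · have h_mem := Nat.sSup_mem ⟨0, h_zero⟩ ⟨m, h_bdd⟩
    rwa [Set.mem_ofPred_eq, ← mccoyRank, h] at h_mem
  · exact le_antisymm (csSup_le ⟨0, h_zero⟩ h_bdd) (le_csSup ⟨m, h_bdd⟩ h)

end Minors

theorem mccoyRank_eq_iff_linearIndependent_map_residue {R : Type*} [CommRing R]
    [IsLocalRing R] [IsArtinianRing R] {m n : ℕ} (A : Matrix (Fin m) (Fin n) R) :
    mccoyRank A = m ↔ LinearIndependent (ResidueField R) (A.map (residue R)).row := by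
  rw [mccoyRank_eq_iff, annihilator_eq_bot_iff_eq_top, minorsIdeal, span_eq_top_iff_exists_isUnit,
    ← exists_isUnit_det_submatrix_iff_linearIndependent_row]
  have h_det (r : Fin m → Fin m) (c : Fin m → Fin n) :
      ((A.map (residue R)).submatrix r c).det = residue R (A.submatrix r c).det := by
    rw [submatrix_map, RingHom.map_det]; rfl
  simp only [h_det, isUnit_map_iff]
  exact ⟨fun ⟨_, ⟨r, c, rfl⟩, hu⟩ => ⟨r, c, hu⟩, fun ⟨r, c, hu⟩ => ⟨_, ⟨r, c, rfl⟩, hu⟩⟩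

/-- The second component depends on a choice of coset representatives. -/
noncomputable def Submodule.equivQuotientProd {R M : Type*} [Ring R] [AddCommGroup M]
    [Module R M] (p : Submodule R M) : M ≃ (M ⧸ p) × p :=
  AddSubgroup.addGroupEquivQuotientProdAddSubgroup (s := p.toAddSubgroup)

def Matrix.equivProdOfEquiv {m n α β γ : Type*} (e : α ≃ β × γ) :
    Matrix m n α ≃ Matrix m n β × Matrix m n γ where
  toFun A := (A.map fun a => (e a).1, A.map fun a => (e a).2)
  invFun B := of fun i j => e.symm (B.1 i j, B.2 i j)
  left_inv A := by ext; simp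
  right_inv B := by ext <;> simp

theorem Matrix.card_subtype_map_of_equiv_prod {m n α β γ : Type*} {f : α → β} (e : α ≃ β × γ)
    (he : ∀ a, (e a).1 = f a) (P : Matrix m n β → Prop) :
    Nat.card {A : Matrix m n α // P (A.map f)} = Nat.card {B // P B} * Nat.card (Matrix m n γ) := by
  have he' : (fun a => (e a).1) = f := funext he
  subst he'
  rw [← Nat.card_prod]
  exact Nat.card_congr
    (((equivProdOfEquiv e).subtypeEquiv fun _ => Iff.rfl).trans Equiv.prodSubtypeFstEquivSubtypeProd)

theorem Matrix.card_linearIndependent_row {K : Type*} [Field K] [Finite K] {m n : ℕ}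
    (hmn : m ≤ n) :
    Nat.card {B : Matrix (Fin m) (Fin n) K // LinearIndependent K B.row} =
      ∏ i ∈ Finset.range m, (Nat.card K ^ n - Nat.card K ^ i) := by
  have : Fintype K := Fintype.ofFinite K
  have h := card_linearIndependent (K := K) (V := Fin n → K) (k := m)
    (by rwa [Module.finrank_fin_fun])
  rw [Module.finrank_fin_fun, Fin.prod_univ_eq_prod_range (fun i => Fintype.card K ^ n - _)] at h
  rwa [Nat.card_eq_fintype_card (α := K)]

theorem Nat.prod_range_pow_sub_pow_mul_pow {t q m n : ℕ} (hmn : m ≤ n) :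
    (∏ i ∈ Finset.range m, (q ^ n - q ^ i)) * t ^ (m * n) =
      (t * q) ^ (m * (m - 1) / 2) * ∏ i ∈ Finset.range m, ((t * q) ^ (n - i) - t ^ (n - i)) := by
  have h_term : ∀ i ∈ Finset.range m,
      (q ^ n - q ^ i) * t ^ n = (t * q) ^ i * ((t * q) ^ (n - i) - t ^ (n - i)) := by
    intro i hi
    have hin : i ≤ n := (Finset.mem_range.mp hi).le.trans hmn
    have h_low : (t * q) ^ i * t ^ (n - i) = q ^ i * t ^ n := by
      rw [mul_pow, mul_right_comm, ← pow_add, Nat.add_sub_cancel' hin, mul_comm]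
    rw [Nat.sub_mul, Nat.mul_sub, ← pow_add, Nat.add_sub_cancel' hin, h_low, mul_pow, mul_comm]
  calc (∏ i ∈ Finset.range m, (q ^ n - q ^ i)) * t ^ (m * n)
      = ∏ i ∈ Finset.range m, (q ^ n - q ^ i) * t ^ n := by
        rw [Finset.prod_mul_distrib, Finset.prod_const, Finset.card_range, ← pow_mul, mul_comm n]
    _ = ∏ i ∈ Finset.range m, (t * q) ^ i * ((t * q) ^ (n - i) - t ^ (n - i)) :=
        Finset.prod_congr rfl h_term
    _ = _ := by rw [Finset.prod_mul_distrib, Finset.prod_pow_eq_pow_sum, Finset.sum_range_id]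

theorem card_matrices_mccoyRank_eq {R : Type*} [CommRing R] [IsLocalRing R] [Fintype R]
    {m n : ℕ} (hmn : m ≤ n) :
    Nat.card {A : Matrix (Fin m) (Fin n) R // mccoyRank A = m} =
      Nat.card R ^ (m * (m - 1) / 2) *
        ∏ i ∈ Finset.range m,
          (Nat.card R ^ (n - i) - Nat.card (IsLocalRing.maximalIdeal R) ^ (n - i)) := by
  have : Finite (ResidueField R) := .of_surjective _ residue_surjective
  calc Nat.card {A : Matrix (Fin m) (Fin n) R // mccoyRank A = m}
      = Nat.card {A : Matrix (Fin m) (Fin n) R //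
          LinearIndependent (ResidueField R) (A.map (residue R)).row} :=
        Nat.card_congr (Equiv.subtypeEquivRight mccoyRank_eq_iff_linearIndependent_map_residue)
    _ = Nat.card {B : Matrix (Fin m) (Fin n) (ResidueField R) //
            LinearIndependent (ResidueField R) B.row} *
          Nat.card (Matrix (Fin m) (Fin n) (maximalIdeal R)) :=
        card_subtype_map_of_equiv_prod (β := ResidueField R) (f := residue R)
          (maximalIdeal R).equivQuotientProd (fun _ => rfl) fun B => LinearIndependent _ B.row
    _ = (∏ i ∈ Finset.range m, (Nat.card (ResidueField R) ^ n - Nat.card (ResidueField R) ^ i)) *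
          Nat.card (maximalIdeal R) ^ (m * n) := by
        rw [card_linearIndependent_row hmn, Matrix, Nat.card_fun, Nat.card_fun, Nat.card_fin,
          Nat.card_fin, ← pow_mul, mul_comm n]
    _ = _ := by
        rw [Submodule.card_eq_card_quotient_mul_card (maximalIdeal R)]
        exact Nat.prod_range_pow_sub_pow_mul_pow hmn
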